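/- Let p ≥ 2 be an integer and r a real number with 0 < r < 1, and let w₀ = (1/p, …, 1/p) ∈ ℝ^p. For every vector w ∈ ℝ^p with wᵢ ≥ 0 for all i and Σᵢ wᵢ = 1, one has Q(w,r) ≥ Q(w₀,r) = 1/(p + p(p−1)r); that is, the average group effect τ_a = (1/p)Σᵢ βᵢ is the optimal (most accurately estimable) properly weighted group effect at every fixed multicollinearity level r. -/

import Mathlib

/-!
Write `J` for the all-ones matrix, so that `A(p,r) = (1 - r) I + r J`. Since `J² = p J`, the
Sherman–Morrison formula gives `A⁻¹ = (1 - r)⁻¹ I - r / ((1 - r)(1 - r + p r)) J`, hence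
`Q(w,r) = (1 - r)⁻¹ ‖w‖² - r / ((1 - r)(1 - r + p r)) (∑ wᵢ)²`. On weights with `∑ wᵢ = 1` only
the term `‖w‖²` varies, and by Cauchy–Schwarz it is at least `1 / p`, with equality at the
uniform weights.
-/

open Matrix

/-- The `p × p` Gram/correlation matrix of a uniform model at multicollinearity
level `r`: diagonal entries `1`, off-diagonal entries `r`. -/
noncomputable def unifMat (p : ℕ) (r : ℝ) : Matrix (Fin p) (Fin p) ℝ :=
  fun i j => if i = j then 1 else r

/-- `Q(w,r) = wᵀ A(p,r)⁻¹ w`. -/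
noncomputable def Qform (p : ℕ) (r : ℝ) (w : Fin p → ℝ) : ℝ :=
  w ⬝ᵥ (unifMat p r)⁻¹.mulVec w

section UniformMatrix

variable {ι K : Type*} [Fintype ι] [DecidableEq ι] [Field K]

theorem inv_smul_one_add_smul_vecMulVec_one {a b : K} (ha : a ≠ 0)
    (hab : a + Fintype.card ι * b ≠ 0) :
    (a • (1 : Matrix ι ι K) + b • vecMulVec 1 1)⁻¹ =
      a⁻¹ • 1 - (b / (a * (a + Fintype.card ι * b))) • vecMulVec 1 1 := by
  set c := b / (a * (a + Fintype.card ι * b)) with hc_def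
  have hc : c * (a + Fintype.card ι * b) = b * a⁻¹ := by
    rw [hc_def, ← div_div, div_mul_cancel₀ _ hab, div_eq_mul_inv]
  apply inv_eq_right_inv
  calc (a • (1 : Matrix ι ι K) + b • vecMulVec 1 1) * (a⁻¹ • 1 - c • vecMulVec 1 1)
      = (a * a⁻¹) • 1 + (b * a⁻¹ - c * (a + Fintype.card ι * b)) • vecMulVec 1 1 := by
        simp only [add_mul, mul_sub, smul_mul_smul, Matrix.one_mul, Matrix.mul_one,
          vecMulVec_mul_vecMulVec, one_dotProduct_one, vecMulVec_smul]
        module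
    _ = 1 := by rw [mul_inv_cancel₀ ha, hc, sub_self, one_smul, zero_smul, add_zero]

theorem dotProduct_smul_one_sub_smul_vecMulVec_one_mulVec (α β : K) (w : ι → K) :
    w ⬝ᵥ ((α • (1 : Matrix ι ι K) - β • vecMulVec 1 1) *ᵥ w) =
      α * (w ⬝ᵥ w) - β * (∑ i, w i) ^ 2 := by
  simp only [sub_mulVec, smul_mulVec, one_mulVec, vecMulVec_mulVec, dotProduct_sub,
    dotProduct_smul, one_dotProduct, dotProduct_one, smul_eq_mul, op_smul_eq_mul, sq]

end UniformMatrix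

theorem inv_card_le_dotProduct_self {ι K : Type*} [Fintype ι] [Field K] [LinearOrder K]
    [IsStrictOrderedRing K] {w : ι → K} (hw : ∑ i, w i = 1) :
    (Fintype.card ι : K)⁻¹ ≤ w ⬝ᵥ w := by
  have hcs : 1 ≤ (Fintype.card ι : K) * (w ⬝ᵥ w) := by
    simpa [hw, dotProduct, sq] using sq_sum_le_card_mul_sum_sq (s := Finset.univ) (f := w)
  have hcard : (0 : K) < Fintype.card ι := pos_of_mul_pos_left (zero_lt_one.trans_le hcs)
    (Finset.sum_nonneg fun i _ => mul_self_nonneg (w i))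
  rwa [inv_le_iff_one_le_mul₀' hcard]

theorem unifMat_eq (p : ℕ) (r : ℝ) : unifMat p r = (1 - r) • 1 + r • vecMulVec 1 1 := by
  ext i j
  by_cases h : i = j <;> simp [unifMat, one_apply, h]

theorem Qform_eq {p : ℕ} {r : ℝ} (hr0 : 0 < r) (hr1 : r < 1) (w : Fin p → ℝ) :
    Qform p r w = (1 - r)⁻¹ * (w ⬝ᵥ w) - r / ((1 - r) * (1 - r + p * r)) * (∑ i, w i) ^ 2 := by
  rw [Qform, unifMat_eq, inv_smul_one_add_smul_vecMulVec_one (by linarith) (by positivity),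
    dotProduct_smul_one_sub_smul_vecMulVec_one_mulVec, Fintype.card_fin]

theorem Qform_eq_of_sum_eq_one {p : ℕ} {r : ℝ} (hr0 : 0 < r) (hr1 : r < 1) {w : Fin p → ℝ}
    (hw : ∑ i, w i = 1) :
    Qform p r w = (1 - r)⁻¹ * (w ⬝ᵥ w) - r / ((1 - r) * (1 - r + p * r)) := by
  rw [Qform_eq hr0 hr1, hw, one_pow, mul_one]

theorem sum_uniform_weights {p : ℕ} (hp : p ≠ 0) : ∑ _i : Fin p, 1 / (p : ℝ) = 1 := by
  simp [hp]

theorem dotProduct_self_uniform_weights (p : ℕ) :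
    (fun _ : Fin p => 1 / (p : ℝ)) ⬝ᵥ (fun _ => 1 / (p : ℝ)) = 1 / p := by
  rcases eq_or_ne p 0 with rfl | hp
  · simp
  simp [dotProduct]
  field_simp

theorem Qform_uniform {p : ℕ} {r : ℝ} (hr0 : 0 < r) (hr1 : r < 1) :
    Qform p r (fun _ => 1 / (p : ℝ)) = 1 / ((p : ℝ) + (p : ℝ) * ((p : ℝ) - 1) * r) := by
  rcases eq_or_ne p 0 with rfl | hp
  · simp [Qform]
  have h1r : 1 - r ≠ 0 := by linarith
  have hpr : 1 - r + p * r ≠ 0 := by positivity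
  rw [Qform_eq_of_sum_eq_one hr0 hr1 (sum_uniform_weights hp), dotProduct_self_uniform_weights,
    show (p : ℝ) + p * (p - 1) * r = p * (1 - r + p * r) by ring]
  generalize hd : 1 - r + p * r = d at hpr ⊢
  field_simp
  linear_combination -hd

theorem Qform_uniform_le {p : ℕ} {r : ℝ} (hr0 : 0 < r) (hr1 : r < 1) {w : Fin p → ℝ}
    (hw : ∑ i, w i = 1) : Qform p r (fun _ => 1 / (p : ℝ)) ≤ Qform p r w := by
  have hp : p ≠ 0 := by
    rintro rfl
    simp at hw
  have h1r : 0 < 1 - r := by linarith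
  rw [Qform_eq_of_sum_eq_one hr0 hr1 hw,
    Qform_eq_of_sum_eq_one hr0 hr1 (sum_uniform_weights hp), dotProduct_self_uniform_weights]
  gcongr
  simpa using inv_card_le_dotProduct_self hw

theorem average_group_effect_optimal_general (p : ℕ) (r : ℝ)
    (hr0 : 0 < r) (hr1 : r < 1) :
    Qform p r (fun _ => 1 / (p : ℝ)) = 1 / ((p : ℝ) + (p : ℝ) * ((p : ℝ) - 1) * r) ∧
    (∀ w : Fin p → ℝ, (∀ i, 0 ≤ w i) → (∑ i, w i) = 1 →
      Qform p r (fun _ => 1 / (p : ℝ)) ≤ Qform p r w) :=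
  ⟨Qform_uniform hr0 hr1, fun _ _ hw => Qform_uniform_le hr0 hr1 hw⟩

/-- with `w₀ = (1/p, …, 1/p)`, for every nonnegative weight vector
`w` summing to 1 one has `Q(w,r) ≥ Q(w₀,r) = 1/(p + p(p−1)r)`; the average group
effect is optimal at every fixed multicollinearity level `r`. -/
theorem average_group_effect_optimal (p : ℕ) (hp : 2 ≤ p) (r : ℝ)
    (hr0 : 0 < r) (hr1 : r < 1) :
    Qform p r (fun _ => 1 / (p : ℝ)) = 1 / ((p : ℝ) + (p : ℝ) * ((p : ℝ) - 1) * r) ∧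
    (∀ w : Fin p → ℝ, (∀ i, 0 ≤ w i) → (∑ i, w i) = 1 →
      Qform p r (fun _ => 1 / (p : ℝ)) ≤ Qform p r w) :=
  average_group_effect_optimal_general p r hr0 hr1
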